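/- arXiv:1510.01775 — 12 statements merged into one kernel-verified Lean document; each statement's English description precedes it below -/
import Mathlib

section
/- Let λ be a compatible ◊₁-cone with vertex a commutative unital quantale (H, *, u), and assume that every element of H is a supremum of elements of the form λ_C(a, b) (C an object of 𝒞, a ∈ F(C), b ∈ F'(C)). Then every w ∈ H satisfies w * w = w and w ≤ u; consequently u = ⊤, x * y = x ⊓ y for all x, y ∈ H, and H is a frame (binary infima distribute over arbitrary suprema). (The paper states this for compatible ◊-cones; the proof only uses the ◊₁ diagrams for the diagonal and the projection to the terminal object.) -/
open CategoryTheory CategoryTheory.Limits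

universe v u w

/-- Let `λ` be a compatible `◊₁`-cone with vertex a commutative unital quantale
`(H, *, 1)` whose elements are all suprema of elements of the form `λ_C(a, b)`.
Then every `w : H` satisfies `w * w = w` and `w ≤ 1`; consequently `1 = ⊤`,
`x * y = x ⊓ y`, and `H` is a frame (binary infima distribute over arbitrary
suprema). -/
theorem compatible_diamond₁_cone_vertex_is_frame
    {H : Type w} [CompleteLattice H] [CommMonoid H]
    (mul_sSup : ∀ (a : H) (s : Set H), a * sSup s = ⨆ b ∈ s, a * b)
    (sSup_mul : ∀ (s : Set H) (a : H), sSup s * a = ⨆ b ∈ s, b * a)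
    {C : Type u} [Category.{v} C] [HasTerminal C] [HasBinaryProducts C]
    (F F' : C ⥤ Type w)
    [PreservesFiniteProducts F] [PreservesFiniteProducts F']
    (lam : ∀ X : C, F.obj X → F'.obj X → H)
    -- ◊₁-cone
    (hdiam₁ : ∀ {X Y : C} (f : X ⟶ Y) (a : F.obj X) (b' : F'.obj Y),
      lam Y (F.map f a) b' = ⨆ y : F'.obj X, ⨆ (_ : F'.map f y = b'), lam X a y)
    -- compatibility (C1)
    (hC1 : ∀ (X Y : C) (z : F.obj (X ⨯ Y)) (z' : F'.obj (X ⨯ Y)),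
      lam (X ⨯ Y) z z' =
        lam X (F.map Limits.prod.fst z) (F'.map Limits.prod.fst z') *
          lam Y (F.map Limits.prod.snd z) (F'.map Limits.prod.snd z'))
    -- compatibility (C2)
    (hC2 : ∀ (z : F.obj (⊤_ C)) (z' : F'.obj (⊤_ C)), lam (⊤_ C) z z' = 1)
    -- every element of H is a supremum of elements of the form λ_C(a, b)
    (hgen : ∀ w : H, ∃ s : Set H,
      (∀ h ∈ s, ∃ (X : C) (a : F.obj X) (b : F'.obj X), h = lam X a b) ∧ w = sSup s) :
    (∀ w : H, w * w = w ∧ w ≤ 1) ∧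
    (1 : H) = ⊤ ∧
    (∀ x y : H, x * y = x ⊓ y) ∧
    (∀ (a : H) (s : Set H), a ⊓ sSup s = ⨆ b ∈ s, a ⊓ b) := by

  -- mul is monotone in each variable
  have hmono : ∀ a b c : H, b ≤ c → a * b ≤ a * c := by
    intro a b c h
    have hc : c = sSup {b, c} := by rw [sSup_pair, sup_eq_right.mpr h]
    calc a * b ≤ ⨆ x ∈ ({b, c} : Set H), a * x :=
          le_biSup _ (by simp)
      _ = a * sSup {b, c} := (mul_sSup a {b, c}).symm
      _ = a * c := by rw [← hc]
  have hmono' : ∀ a b c : H, b ≤ c → b * a ≤ c * a := by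
    intro a b c h
    rw [mul_comm b a, mul_comm c a]; exact hmono a b c h
  -- generators are ≤ 1
  have gen_le_one : ∀ (X : C) (a : F.obj X) (b : F'.obj X), lam X a b ≤ 1 := by
    intro X a b
    have h := hdiam₁ (terminal.from X) a (F'.map (terminal.from X) b)
    rw [hC2] at h
    calc lam X a b
        ≤ ⨆ y, ⨆ (_ : F'.map (terminal.from X) y = F'.map (terminal.from X) b), lam X a y :=
          le_iSup_of_le b (le_iSup_of_le rfl le_rfl)
      _ = 1 := h.symm
  -- generators are idempotent
  have gen_idem : ∀ (X : C) (a : F.obj X) (b : F'.obj X), lam X a b * lam X a b = lam X a b := by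
    intro X a b
    set δ : X ⟶ X ⨯ X := prod.lift (𝟙 X) (𝟙 X) with hδ
    have hfst : δ ≫ Limits.prod.fst = 𝟙 X := prod.lift_fst _ _
    have hsnd : δ ≫ Limits.prod.snd = 𝟙 X := prod.lift_snd _ _
    have e1 : F.map Limits.prod.fst (F.map δ a) = a := by
      rw [← FunctorToTypes.map_comp_apply, hfst, FunctorToTypes.map_id_apply]
    have e2 : F.map Limits.prod.snd (F.map δ a) = a := by
      rw [← FunctorToTypes.map_comp_apply, hsnd, FunctorToTypes.map_id_apply]
    have e1' : F'.map Limits.prod.fst (F'.map δ b) = b := by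
      rw [← FunctorToTypes.map_comp_apply, hfst, FunctorToTypes.map_id_apply]
    have e2' : F'.map Limits.prod.snd (F'.map δ b) = b := by
      rw [← FunctorToTypes.map_comp_apply, hsnd, FunctorToTypes.map_id_apply]
    have key := hdiam₁ δ a (F'.map δ b)
    rw [hC1, e1, e2, e1', e2'] at key
    rw [key]
    apply le_antisymm
    · apply iSup_le; intro y; apply iSup_le; intro hy
      have hyb : y = b := by
        have h2 := congrArg (F'.map Limits.prod.fst) hy
        rwa [← FunctorToTypes.map_comp_apply, ← FunctorToTypes.map_comp_apply, hfst,
          FunctorToTypes.map_id_apply, FunctorToTypes.map_id_apply] at h2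
      rw [hyb]
    · exact le_iSup_of_le b (le_iSup_of_le rfl le_rfl)
  -- every element is ≤ 1 and idempotent
  have hle1 : ∀ w : H, w ≤ 1 := by
    intro w
    obtain ⟨s, hs, rfl⟩ := hgen w
    apply sSup_le
    intro h hh
    obtain ⟨X, a, b, rfl⟩ := hs h hh
    exact gen_le_one X a b
  have hidem : ∀ w : H, w * w = w := by
    intro w
    obtain ⟨s, hs, rfl⟩ := hgen w
    apply le_antisymm
    · rw [sSup_mul]
      apply iSup_le; intro b; apply iSup_le; intro hb
      calc b * sSup s ≤ b * 1 := hmono b _ 1 (sSup_le fun h hh => by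
            obtain ⟨X, a, c, rfl⟩ := hs h hh; exact gen_le_one X a c)
        _ = b := mul_one b
        _ ≤ sSup s := le_sSup hb
    · apply sSup_le; intro b hb
      obtain ⟨X, a, c, hbc⟩ := hs b hb
      calc b = b * b := by rw [hbc, gen_idem X a c]
        _ ≤ sSup s * b := hmono' b b (sSup s) (le_sSup hb)
        _ ≤ sSup s * sSup s := hmono (sSup s) b (sSup s) (le_sSup hb)
  have h1top : (1 : H) = ⊤ := le_antisymm le_top (hle1 ⊤)
  have hinf : ∀ x y : H, x * y = x ⊓ y := by
    intro x y
    apply le_antisymm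
    · exact le_inf (by calc x * y ≤ x * 1 := hmono x y 1 (hle1 y)
          _ = x := mul_one x)
        (by calc x * y ≤ 1 * y := hmono' y x 1 (hle1 x)
          _ = y := one_mul y)
    · calc x ⊓ y = (x ⊓ y) * (x ⊓ y) := (hidem _).symm
        _ ≤ x * (x ⊓ y) := hmono' _ _ _ inf_le_left
        _ ≤ x * y := hmono _ _ _ inf_le_right
  refine ⟨fun w => ⟨hidem w, hle1 w⟩, h1top, hinf, ?_⟩
  intro a s
  rw [← hinf a (sSup s), mul_sSup a s]
  exact iSup_congr fun b => iSup_congr fun _ => hinf a b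
end

section
/- Let H be a frame, regarded as a commutative unital quantale with multiplication * = ⊓ and unit u = ⊤, and let λ be a ◊₁-cone with vertex H. Then λ is compatible if and only if every λ_C is an ℓ-function, i.e. for every object C of 𝒞: (ed) ⨆ y : F'(C), λ_C(a, y) = ⊤ for all a ∈ F(C), and (uv) λ_C(a, y₁) ⊓ λ_C(a, y₂) ≤ (y₁ = y₂) • ⊤ for all a ∈ F(C), y₁, y₂ ∈ F'(C). -/
/-!
The ◊₁ condition makes `λ` monotone along maps, and since `F'(1)` is a point it identifies
`λ_1(F(!)a, b)` with `⨆ y, λ_C(a, y)`; hence (C2) is equivalent to (ed). Along the diagonal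
`Δ : C → C × C` it identifies `λ_{C×C}(Δa, z')` with `⨆` of `λ_C(a, y)` over those `y` with
`F'(Δ)y = z'`, which is `⊥` unless both components of `z'` agree; with (C1) this gives (uv).
Conversely, expanding both sides of the meet in (C1) by ◊₁ and distributing leaves the terms
`λ(z, w) ⊓ λ(z, v)` with `w, v` lying over the components of `z'`: they vanish by (uv) unless
`w = v`, and then `w = z'` because `F'(C × D) → F'C × F'D` is a bijection.
-/

open CategoryTheory CategoryTheory.Limits

universe v u w

section ProductPreserving

variable {C : Type u} [Category.{v} C] (G : C ⥤ Type w)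

theorem bijective_map_fst_map_snd (X Y : C) [HasBinaryProduct X Y]
    [PreservesLimit (pair X Y) G] :
    Function.Bijective fun z : G.obj (X ⨯ Y) => (G.map prod.fst z, G.map prod.snd z) := by
  convert ((PreservesLimitPair.iso G X Y ≪≫ Types.binaryProductIso _ _).toEquiv).bijective
  · simp [← types_comp_apply (prodComparison G X Y) prod.fst]
  · simp [← types_comp_apply (prodComparison G X Y) prod.snd]

theorem map_fst_map_diag {X : C} [HasBinaryProduct X X] (a : G.obj X) :
    G.map prod.fst (G.map (diag X) a) = a := by
  rw [← Functor.map_comp_apply, prod.lift_fst, Functor.map_id_apply]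

theorem map_snd_map_diag {X : C} [HasBinaryProduct X X] (a : G.obj X) :
    G.map prod.snd (G.map (diag X) a) = a := by
  rw [← Functor.map_comp_apply, prod.lift_snd, Functor.map_id_apply]

theorem nonempty_subsingleton_obj_terminal [HasTerminal C]
    [PreservesLimit (Functor.empty.{0} C) G] :
    Nonempty (G.obj (⊤_ C)) ∧ Subsingleton (G.obj (⊤_ C)) :=
  let e := (PreservesTerminal.iso G ≪≫ Types.terminalIso).toEquiv
  ⟨⟨e.symm PUnit.unit⟩, e.subsingleton⟩

end ProductPreserving

section Cone

variable {H : Type*} [CompleteLattice H] {C : Type u} [Category.{v} C] {F F' : C ⥤ Type w}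

def IsDiamondOneCone (F F' : C ⥤ Type w) (lam : ∀ X : C, F.obj X → F'.obj X → H) : Prop :=
  ∀ {X Y : C} (f : X ⟶ Y) (a : F.obj X) (b' : F'.obj Y),
    lam Y (F.map f a) b' = ⨆ y : F'.obj X, ⨆ (_ : F'.map f y = b'), lam X a y

namespace IsDiamondOneCone

variable {lam : ∀ X : C, F.obj X → F'.obj X → H}

theorem le_map (hlam : IsDiamondOneCone F F' lam) {X Y : C} (f : X ⟶ Y) (a : F.obj X)
    (y : F'.obj X) :
    lam X a y ≤ lam Y (F.map f a) (F'.map f y) := by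
  rw [hlam]
  exact le_iSup₂_of_le y rfl le_rfl

theorem terminal_eq_iSup (hlam : IsDiamondOneCone F F' lam) [HasTerminal C]
    [Subsingleton (F'.obj (⊤_ C))] (X : C) (a : F.obj X) (b : F'.obj (⊤_ C)) :
    lam (⊤_ C) (F.map (terminal.from X) a) b = ⨆ y, lam X a y := by
  rw [hlam]
  exact iSup_congr fun y => iSup_pos (Subsingleton.elim _ _)

theorem terminal_eq_top_iff (hlam : IsDiamondOneCone F F' lam) [HasTerminal C]
    [PreservesLimit (Functor.empty.{0} C) F'] :
    (∀ z z', lam (⊤_ C) z z' = ⊤) ↔ ∀ X a, ⨆ y, lam X a y = ⊤ := by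
  obtain ⟨⟨b⟩, _⟩ := nonempty_subsingleton_obj_terminal F'
  refine ⟨fun h X a => ?_, fun h z z' => ?_⟩
  · rw [← hlam.terminal_eq_iSup X a b, h]
  · have := hlam.terminal_eq_iSup (⊤_ C) z z'
    rwa [Subsingleton.elim (terminal.from _) (𝟙 _), Functor.map_id_apply, h] at this

theorem inf_le_of_prod_eq_inf (hlam : IsDiamondOneCone F F' lam) {X : C} [HasBinaryProduct X X]
    [PreservesLimit (pair X X) F']
    (hprod : ∀ z z', lam (X ⨯ X) z z' =
      lam X (F.map prod.fst z) (F'.map prod.fst z') ⊓ lam X (F.map prod.snd z) (F'.map prod.snd z'))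
    (a : F.obj X) (y₁ y₂ : F'.obj X) : lam X a y₁ ⊓ lam X a y₂ ≤ ⨆ (_ : y₁ = y₂), (⊤ : H) := by
  obtain ⟨z', hz'⟩ := (bijective_map_fst_map_snd F' X X).2 (y₁, y₂)
  simp only [Prod.ext_iff] at hz'
  have hdiag : lam X a y₁ ⊓ lam X a y₂ = lam (X ⨯ X) (F.map (diag X) a) z' := by
    rw [hprod, ← hz'.1, ← hz'.2, map_fst_map_diag, map_snd_map_diag]
  rw [hdiag, hlam]
  refine iSup₂_le fun y hy => le_iSup_of_le ?_ le_top
  rw [← hz'.1, ← hz'.2, ← hy, map_fst_map_diag, map_snd_map_diag]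

end IsDiamondOneCone

end Cone

section FrameCone

variable {H : Type*} [Order.Frame H] {C : Type u} [Category.{v} C] {F F' : C ⥤ Type w}
  {lam : ∀ X : C, F.obj X → F'.obj X → H}

namespace IsDiamondOneCone

theorem prod_eq_inf (hlam : IsDiamondOneCone F F' lam) {X Y : C} [HasBinaryProduct X Y]
    [PreservesLimit (pair X Y) F']
    (huv : ∀ a (y₁ y₂ : F'.obj (X ⨯ Y)), lam _ a y₁ ⊓ lam _ a y₂ ≤ ⨆ (_ : y₁ = y₂), (⊤ : H))
    (z : F.obj (X ⨯ Y)) (z' : F'.obj (X ⨯ Y)) :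
    lam (X ⨯ Y) z z' =
      lam X (F.map prod.fst z) (F'.map prod.fst z') ⊓
        lam Y (F.map prod.snd z) (F'.map prod.snd z') := by
  refine le_antisymm (le_inf (hlam.le_map _ z z') (hlam.le_map _ z z')) ?_
  rw [hlam, hlam, iSup_inf_iSup]
  refine iSup_le fun ⟨w, v⟩ => ?_
  simp only [iSup_inf_eq, inf_iSup_eq]
  refine iSup₂_le fun hsnd hfst => ?_
  obtain rfl | hwv := eq_or_ne w v
  · obtain rfl : w = z' := (bijective_map_fst_map_snd F' X Y).1 (Prod.ext hfst hsnd)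
    exact inf_le_left
  · exact (huv z w v).trans (by simp [hwv])

theorem prod_eq_inf_iff (hlam : IsDiamondOneCone F F' lam) [HasBinaryProducts C]
    [PreservesLimitsOfShape (Discrete WalkingPair) F'] :
    (∀ (X Y : C) z z', lam (X ⨯ Y) z z' =
      lam X (F.map prod.fst z) (F'.map prod.fst z') ⊓ lam Y (F.map prod.snd z) (F'.map prod.snd z'))
    ↔ ∀ X a (y₁ y₂ : F'.obj X), lam X a y₁ ⊓ lam X a y₂ ≤ ⨆ (_ : y₁ = y₂), (⊤ : H) :=
  ⟨fun h X => hlam.inf_le_of_prod_eq_inf (h X X), fun h _ _ => hlam.prod_eq_inf (h _)⟩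

end IsDiamondOneCone

end FrameCone

theorem compatible_iff_cone_of_lFunctions_general
    {H : Type w} [Order.Frame H]
    {C : Type u} [Category.{v} C] [HasTerminal C] [HasBinaryProducts C]
    (F F' : C ⥤ Type w)
    [PreservesFiniteProducts F']
    (lam : ∀ X : C, F.obj X → F'.obj X → H)
    -- ◊₁-cone
    (hdiam₁ : ∀ {X Y : C} (f : X ⟶ Y) (a : F.obj X) (b' : F'.obj Y),
      lam Y (F.map f a) b' = ⨆ y : F'.obj X, ⨆ (_ : F'.map f y = b'), lam X a y) :
    -- compatibility (with * = ⊓, u = ⊤)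
    ((∀ (X Y : C) (z : F.obj (X ⨯ Y)) (z' : F'.obj (X ⨯ Y)),
        lam (X ⨯ Y) z z' =
          lam X (F.map Limits.prod.fst z) (F'.map Limits.prod.fst z') ⊓
            lam Y (F.map Limits.prod.snd z) (F'.map Limits.prod.snd z')) ∧
      (∀ (z : F.obj (⊤_ C)) (z' : F'.obj (⊤_ C)), lam (⊤_ C) z z' = ⊤))
    ↔
    -- every λ_C is an ℓ-function
    (∀ X : C,
      (∀ a : F.obj X, (⨆ y : F'.obj X, lam X a y) = ⊤) ∧
      (∀ (a : F.obj X) (y₁ y₂ : F'.obj X),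
        lam X a y₁ ⊓ lam X a y₂ ≤ ⨆ (_ : y₁ = y₂), (⊤ : H))) := by
  have hlam : IsDiamondOneCone F F' lam := hdiam₁
  rw [hlam.prod_eq_inf_iff, hlam.terminal_eq_top_iff]
  exact ⟨fun ⟨huv, hed⟩ X => ⟨hed X, huv X⟩, fun h => ⟨fun X => (h X).2, fun X => (h X).1⟩⟩

/-- Let `H` be a frame (regarded as a commutative unital quantale with `* = ⊓`
and `u = ⊤`) and `λ` a `◊₁`-cone with vertex `H`.  Then `λ` is compatible if
and only if every `λ_C` is an ℓ-function, i.e. (ed) `⨆ y, λ_C(a, y) = ⊤` and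
(uv) `λ_C(a, y₁) ⊓ λ_C(a, y₂) ≤ (y₁ = y₂) • ⊤`. -/
theorem compatible_iff_cone_of_lFunctions
    {H : Type w} [Order.Frame H]
    {C : Type u} [Category.{v} C] [HasTerminal C] [HasBinaryProducts C]
    (F F' : C ⥤ Type w)
    [PreservesFiniteProducts F] [PreservesFiniteProducts F']
    (lam : ∀ X : C, F.obj X → F'.obj X → H)
    -- ◊₁-cone
    (hdiam₁ : ∀ {X Y : C} (f : X ⟶ Y) (a : F.obj X) (b' : F'.obj Y),
      lam Y (F.map f a) b' = ⨆ y : F'.obj X, ⨆ (_ : F'.map f y = b'), lam X a y) :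
    -- compatibility (with * = ⊓, u = ⊤)
    ((∀ (X Y : C) (z : F.obj (X ⨯ Y)) (z' : F'.obj (X ⨯ Y)),
        lam (X ⨯ Y) z z' =
          lam X (F.map Limits.prod.fst z) (F'.map Limits.prod.fst z') ⊓
            lam Y (F.map Limits.prod.snd z) (F'.map Limits.prod.snd z')) ∧
      (∀ (z : F.obj (⊤_ C)) (z' : F'.obj (⊤_ C)), lam (⊤_ C) z z' = ⊤))
    ↔
    -- every λ_C is an ℓ-function
    (∀ X : C,
      (∀ a : F.obj X, (⨆ y : F'.obj X, lam X a y) = ⊤) ∧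
      (∀ (a : F.obj X) (y₁ y₂ : F'.obj X),
        lam X a y₁ ⊓ lam X a y₂ ≤ ⨆ (_ : y₁ = y₂), (⊤ : H))) :=
  compatible_iff_cone_of_lFunctions_general F F' lam hdiam₁
end

section
/- Let H and H' be frames, let λ be a compatible cone with vertex H such that every element of H is a supremum of elements of the form λ_C(a, b), and let λ' be a compatible cone with vertex H'. If σ : H → H' preserves arbitrary suprema and satisfies σ(λ_C(a, b)) = λ'_C(a, b) for every object C of 𝒞 and all a ∈ F(C), b ∈ F'(C), then σ(⊤) = ⊤ and σ(x ⊓ y) = σ(x) ⊓ σ(y) for all x, y ∈ H; that is, σ is a frame homomorphism. -/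
/-!
Compatibility (C1) writes the meet `λ_C(a, a') ⊓ λ_D(b, b')` as the single value
`λ_{C×D}(z, z')`, where `z`, `z'` exist because `F` and `F'` preserve binary products;
hence `σ` preserves meets of generators, and since meets distribute over suprema in both
frames, it preserves all binary meets. Likewise `F(1)` and `F'(1)` are singletons, so
`σ ⊤ = σ (λ_1(z, z')) = λ'_1(z, z') = ⊤` by (C2).
-/

open CategoryTheory CategoryTheory.Limits

universe v u w

section ProductPreservingFunctor

variable {C : Type u} [Category.{v} C] (F : C ⥤ Type w)

theorem nonempty_obj_terminal [HasTerminal C] [PreservesLimit (Functor.empty.{0} C) F] :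
    Nonempty (F.obj (⊤_ C)) :=
  ⟨(isLimitOfHasTerminalOfPreservesLimit F).from PUnit PUnit.unit⟩

theorem exists_map_fst_eq_and_map_snd_eq {X Y : C} [HasBinaryProduct X Y]
    [PreservesLimit (pair X Y) F] (a : F.obj X) (b : F.obj Y) :
    ∃ z : F.obj (X ⨯ Y), F.map prod.fst z = a ∧ F.map prod.snd z = b :=
  let l := BinaryFan.IsLimit.lift' (isLimitOfHasBinaryProductOfPreservesLimit F X Y)
    (TypeCat.ofHom fun _ : PUnit => a) (TypeCat.ofHom fun _ => b)
  ⟨l.1 PUnit.unit, ConcreteCategory.congr_hom l.2.1 PUnit.unit,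
    ConcreteCategory.congr_hom l.2.2 PUnit.unit⟩

end ProductPreservingFunctor

section Frame

variable {H H' : Type*} [Order.Frame H] [Order.Frame H']

theorem map_inf_of_map_sSup_of_generators {S : Set H} (hS : ∀ x, ∃ s ⊆ S, x = sSup s)
    {σ : H → H'} (hσ : ∀ s, σ (sSup s) = ⨆ x ∈ s, σ x)
    (hσS : ∀ a ∈ S, ∀ b ∈ S, σ (a ⊓ b) = σ a ⊓ σ b) (x y : H) :
    σ (x ⊓ y) = σ x ⊓ σ y := by
  obtain ⟨s, hs, rfl⟩ := hS x
  obtain ⟨t, ht, rfl⟩ := hS y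
  rw [sSup_inf_sSup, ← sSup_image, hσ, hσ, hσ, biSup_inf_biSup, iSup_image]
  exact biSup_congr fun p hp => hσS _ (hs hp.1) _ (ht hp.2)

end Frame

section CompatibleCone

variable {C : Type u} [Category.{v} C] [HasBinaryProducts C] {F F' : C ⥤ Type w}
  {L L' : Type*} [SemilatticeInf L] [SemilatticeInf L']

def IsInfCompatible (lam : ∀ X : C, F.obj X → F'.obj X → L) : Prop :=
  ∀ (X Y : C) (z : F.obj (X ⨯ Y)) (z' : F'.obj (X ⨯ Y)),
    lam (X ⨯ Y) z z' =
      lam X (F.map prod.fst z) (F'.map prod.fst z') ⊓ lam Y (F.map prod.snd z) (F'.map prod.snd z')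

theorem map_inf_of_isInfCompatible [PreservesLimitsOfShape (Discrete WalkingPair) F]
    [PreservesLimitsOfShape (Discrete WalkingPair) F']
    {lam : ∀ X : C, F.obj X → F'.obj X → L} {lam' : ∀ X : C, F.obj X → F'.obj X → L'}
    (hlam : IsInfCompatible lam) (hlam' : IsInfCompatible lam') {σ : L → L'}
    (hσ : ∀ X a b, σ (lam X a b) = lam' X a b)
    (X Y : C) (a : F.obj X) (b : F'.obj X) (c : F.obj Y) (d : F'.obj Y) :
    σ (lam X a b ⊓ lam Y c d) = σ (lam X a b) ⊓ σ (lam Y c d) := by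
  obtain ⟨z, rfl, rfl⟩ := exists_map_fst_eq_and_map_snd_eq F a c
  obtain ⟨z', rfl, rfl⟩ := exists_map_fst_eq_and_map_snd_eq F' b d
  rw [← hlam, hσ, hσ, hσ, hlam']

end CompatibleCone

/-- Let `H`, `H'` be frames, `λ` a compatible cone with vertex `H` whose values
`λ_C(a, b)` generate `H` under suprema, and `λ'` a compatible cone with vertex
`H'`.  Any sup-preserving `σ : H → H'` with `σ(λ_C(a, b)) = λ'_C(a, b)` sends
`⊤` to `⊤` and preserves binary infima; that is, `σ` is a frame homomorphism. -/
theorem sup_morphism_of_compatible_cones_is_frameHom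
    {H : Type w} [Order.Frame H] {H' : Type w} [Order.Frame H']
    {C : Type u} [Category.{v} C] [HasTerminal C] [HasBinaryProducts C]
    (F F' : C ⥤ Type w)
    [PreservesFiniteProducts F] [PreservesFiniteProducts F']
    (lam : ∀ X : C, F.obj X → F'.obj X → H)
    (lam' : ∀ X : C, F.obj X → F'.obj X → H')
    -- λ is compatible
    (hC1 : ∀ (X Y : C) (z : F.obj (X ⨯ Y)) (z' : F'.obj (X ⨯ Y)),
      lam (X ⨯ Y) z z' =
        lam X (F.map Limits.prod.fst z) (F'.map Limits.prod.fst z') ⊓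
          lam Y (F.map Limits.prod.snd z) (F'.map Limits.prod.snd z'))
    (hC2 : ∀ (z : F.obj (⊤_ C)) (z' : F'.obj (⊤_ C)), lam (⊤_ C) z z' = ⊤)
    -- λ' is compatible
    (hC1' : ∀ (X Y : C) (z : F.obj (X ⨯ Y)) (z' : F'.obj (X ⨯ Y)),
      lam' (X ⨯ Y) z z' =
        lam' X (F.map Limits.prod.fst z) (F'.map Limits.prod.fst z') ⊓
          lam' Y (F.map Limits.prod.snd z) (F'.map Limits.prod.snd z'))
    (hC2' : ∀ (z : F.obj (⊤_ C)) (z' : F'.obj (⊤_ C)), lam' (⊤_ C) z z' = ⊤)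
    -- the values of λ generate H under suprema
    (hgen : ∀ w : H, ∃ s : Set H,
      (∀ h ∈ s, ∃ (X : C) (a : F.obj X) (b : F'.obj X), h = lam X a b) ∧ w = sSup s)
    (σ : H → H')
    (hσ_sSup : ∀ s : Set H, σ (sSup s) = ⨆ x ∈ s, σ x)
    (hσ_lam : ∀ (X : C) (a : F.obj X) (b : F'.obj X), σ (lam X a b) = lam' X a b) :
    σ ⊤ = ⊤ ∧ ∀ x y : H, σ (x ⊓ y) = σ x ⊓ σ y := by
  obtain ⟨z⟩ := nonempty_obj_terminal F
  obtain ⟨z'⟩ := nonempty_obj_terminal F'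
  refine ⟨by rw [← hC2 z z', hσ_lam, hC2' z z'], ?_⟩
  refine map_inf_of_map_sSup_of_generators (S := {h | ∃ X a b, h = lam X a b}) hgen hσ_sSup ?_
  rintro _ ⟨X, a, b, rfl⟩ _ ⟨Y, c, d, rfl⟩
  exact map_inf_of_isInfCompatible hC1 hC1' hσ_lam X Y a b c d
end

section
/- Let (H, *, u) be a commutative unital quantale and S ⊆ H a subset such that every element of H is a supremum of elements of S. If every w ∈ S satisfies w * w = w and w ≤ u, then every w ∈ H satisfies w * w = w and w ≤ u; consequently u = ⊤, x * y = x ⊓ y for all x, y ∈ H, and H is a frame (binary infima distribute over arbitrary suprema). -/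
/-- Let `(H, *, u)` be a commutative unital quantale (complete lattice with a
commutative monoid structure whose multiplication distributes over arbitrary
suprema in each variable) and `S ⊆ H` a generating set (every element is a
supremum of elements of `S`).  If every `w ∈ S` satisfies `w * w = w` and
`w ≤ 1`, then every `w ∈ H` does; consequently `1 = ⊤`, `x * y = x ⊓ y` for
all `x y`, and binary infima distribute over arbitrary suprema (H is a frame). -/
theorem quantale_idempotent_generators_frame {H : Type*} [CompleteLattice H] [CommMonoid H]
    (mul_sSup : ∀ (a : H) (s : Set H), a * sSup s = ⨆ b ∈ s, a * b)
    (sSup_mul : ∀ (s : Set H) (a : H), sSup s * a = ⨆ b ∈ s, b * a)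
    (S : Set H)
    (hgen : ∀ w : H, ∃ s : Set H, s ⊆ S ∧ w = sSup s)
    (hS : ∀ w ∈ S, w * w = w ∧ w ≤ 1) :
    (∀ w : H, w * w = w ∧ w ≤ 1) ∧
    (1 : H) = ⊤ ∧
    (∀ x y : H, x * y = x ⊓ y) ∧
    (∀ (a : H) (s : Set H), a ⊓ sSup s = ⨆ b ∈ s, a ⊓ b) := by
  -- monotonicity of multiplication
  have mono_right : ∀ a x y : H, x ≤ y → a * x ≤ a * y := by
    intro a x y hxy
    have h : a * sSup {x, y} = ⨆ b ∈ ({x, y} : Set H), a * b := mul_sSup a _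
    have hy : sSup ({x, y} : Set H) = y := by
      apply le_antisymm
      · exact sSup_le (by rintro b (rfl | rfl) <;> [exact hxy; exact le_rfl])
      · exact le_sSup (by simp)
    rw [hy] at h
    rw [h]
    exact le_biSup _ (by simp)
  have mono_left : ∀ a x y : H, x ≤ y → x * a ≤ y * a := by
    intro a x y hxy
    rw [mul_comm x a, mul_comm y a]; exact mono_right a x y hxy
  -- main pointwise claim
  have hmain : ∀ w : H, w * w = w ∧ w ≤ 1 := by
    intro w
    obtain ⟨s, hsS, rfl⟩ := hgen w
    have hle1 : sSup s ≤ 1 := sSup_le fun b hb => (hS b (hsS hb)).2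
    constructor
    · apply le_antisymm
      · calc sSup s * sSup s ≤ sSup s * 1 := mono_right _ _ _ hle1
          _ = sSup s := mul_one _
      · apply sSup_le
        intro b hb
        calc b = b * b := ((hS b (hsS hb)).1).symm
          _ ≤ sSup s * b := mono_left _ _ _ (le_sSup hb)
          _ ≤ sSup s * sSup s := mono_right _ _ _ (le_sSup hb)
    · exact hle1
  have h1top : (1 : H) = ⊤ := le_antisymm le_top (hmain ⊤).2
  have hmul : ∀ x y : H, x * y = x ⊓ y := by
    intro x y
    apply le_antisymm
    · apply le_inf
      · calc x * y ≤ x * 1 := mono_right _ _ _ (hmain y).2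
          _ = x := mul_one _
      · calc x * y ≤ 1 * y := mono_left _ _ _ (hmain x).2
          _ = y := one_mul _
    · calc x ⊓ y = (x ⊓ y) * (x ⊓ y) := ((hmain _).1).symm
        _ ≤ x * (x ⊓ y) := mono_left _ _ _ inf_le_left
        _ ≤ x * y := mono_right _ _ _ inf_le_right
  refine ⟨hmain, h1top, hmul, fun a s => ?_⟩
  rw [← hmul, mul_sSup]
  exact iSup_congr fun b => iSup_congr fun _ => hmul a b
end

section
/- Let H be a frame, let R : X → X' → Prop and S : Y → Y' → Prop be relations, and let λ : X × Y → H and λ' : X' × Y' → H be ℓ-bijections. Define θ on {p : X × X' // R p.1 p.2} × {q : Y × Y' // S q.1 q.2} as the restriction of the product ℓ-relation: θ((x, x'), (y, y')) = λ(x, y) ⊓ λ'(x', y'). Then ◊(R, S) holds between λ and λ' if and only if θ is an ℓ-bijection. -/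
/-- An ℓ-relation `λ : X × Y → H` is everywhere defined. -/
def LRel.Ed {X Y H : Type*} [CompleteLattice H] (lam : X × Y → H) : Prop :=
  ∀ x : X, (⨆ y : Y, lam (x, y)) = ⊤

/-- An ℓ-relation `λ : X × Y → H` is univalued. -/
def LRel.Uv {X Y H : Type*} [CompleteLattice H] (lam : X × Y → H) : Prop :=
  ∀ (x : X) (y₁ y₂ : Y), lam (x, y₁) ⊓ lam (x, y₂) ≤ ⨆ (_ : y₁ = y₂), (⊤ : H)

/-- An ℓ-relation `λ : X × Y → H` is surjective. -/
def LRel.Su {X Y H : Type*} [CompleteLattice H] (lam : X × Y → H) : Prop :=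
  ∀ y : Y, (⨆ x : X, lam (x, y)) = ⊤

/-- An ℓ-relation `λ : X × Y → H` is injective. -/
def LRel.In {X Y H : Type*} [CompleteLattice H] (lam : X × Y → H) : Prop :=
  ∀ (x₁ x₂ : X) (y : Y), lam (x₁, y) ⊓ lam (x₂, y) ≤ ⨆ (_ : x₁ = x₂), (⊤ : H)

/-- An ℓ-relation is an ℓ-bijection if it is ed, uv, su and in. -/
def LRel.Bij {X Y H : Type*} [CompleteLattice H] (lam : X × Y → H) : Prop :=
  LRel.Ed lam ∧ LRel.Uv lam ∧ LRel.Su lam ∧ LRel.In lam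

private lemma aux_inf_top {H : Type*} [Order.Frame H] {p q r : Prop} (h : p → q → r) :
    (⨆ _ : p, (⊤ : H)) ⊓ (⨆ _ : q, (⊤ : H)) ≤ ⨆ _ : r, ⊤ := by
  rw [iSup_inf_eq]
  refine iSup_le fun hp => ?_
  rw [top_inf_eq]
  exact iSup_le fun hq => le_iSup_of_le (h hp hq) le_rfl

private lemma aux_prop_inf {H : Type*} [Order.Frame H] {p : Prop} (h : H) :
    (⨆ _ : p, (⊤ : H)) ⊓ h = ⨆ _ : p, h := by
  rw [iSup_inf_eq]
  simp

/-- Given relations `R`, `S` and ℓ-bijections `λ`, `λ'`, the diagram `◊(R, S)`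
holds between `λ` and `λ'` if and only if the restriction `θ` of the product
ℓ-relation `λ ⊠ λ'` to `R × S` is an ℓ-bijection. -/
theorem diamond_iff_restriction_lBijection {X X' Y Y' H : Type*} [Order.Frame H]
    (R : X → X' → Prop) (S : Y → Y' → Prop)
    (lam : X × Y → H) (lam' : X' × Y' → H)
    (hlam : LRel.Bij lam) (hlam' : LRel.Bij lam') :
    (∀ (a : X) (b' : Y'),
        (⨆ y : Y, ⨆ (_ : S y b'), lam (a, y)) =
          ⨆ x' : X', ⨆ (_ : R a x'), lam' (x', b')) ↔
    LRel.Bij (fun p : {p : X × X' // R p.1 p.2} × {q : Y × Y' // S q.1 q.2} =>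
      lam (p.1.1.1, p.2.1.1) ⊓ lam' (p.1.1.2, p.2.1.2)) := by
  obtain ⟨ed, uv, su, inj⟩ := hlam
  obtain ⟨ed', uv', su', inj'⟩ := hlam'
  constructor
  · intro hd
    refine ⟨?_, ?_, ?_, ?_⟩
    · -- everywhere defined
      rintro ⟨⟨a, a'⟩, hR⟩
      refine le_antisymm le_top ?_
      calc (⊤ : H) = ⨆ y' : Y', lam' (a', y') := (ed' a').symm
        _ ≤ _ := by
          refine iSup_le fun y' => ?_
          have h1 : lam' (a', y') ≤ ⨆ y, ⨆ _ : S y y', lam (a, y) := by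
            rw [hd a y']
            exact le_iSup_of_le a' (le_iSup_of_le hR le_rfl)
          calc lam' (a', y') = lam' (a', y') ⊓ (⨆ y, ⨆ _ : S y y', lam (a, y)) :=
                (inf_eq_left.mpr h1).symm
            _ = ⨆ y, ⨆ _ : S y y', lam' (a', y') ⊓ lam (a, y) := by
                rw [inf_iSup_eq]
                exact iSup_congr fun y => inf_iSup_eq _ _
            _ ≤ _ := by
                refine iSup_le fun y => iSup_le fun hS => ?_
                exact le_iSup_of_le (⟨(y, y'), hS⟩ : {q : Y × Y' // S q.1 q.2})
                  (by rw [inf_comm])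
    · -- univalued
      rintro ⟨⟨x, x'⟩, hRx⟩ ⟨⟨y₁, y₁'⟩, hS₁⟩ ⟨⟨y₂, y₂'⟩, hS₂⟩
      have key : (lam (x, y₁) ⊓ lam' (x', y₁')) ⊓ (lam (x, y₂) ⊓ lam' (x', y₂')) ≤
          (lam (x, y₁) ⊓ lam (x, y₂)) ⊓ (lam' (x', y₁') ⊓ lam' (x', y₂')) := by
        refine le_inf (le_inf ?_ ?_) (le_inf ?_ ?_) <;>
          simp [inf_le_of_left_le, inf_le_of_right_le, inf_le_left, inf_le_right]
      refine key.trans ((inf_le_inf (uv x y₁ y₂) (uv' x' y₁' y₂')).trans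
        (aux_inf_top fun h1 h2 => ?_))
      exact Subtype.ext (Prod.ext h1 h2)
    · -- surjective
      rintro ⟨⟨b, b'⟩, hS⟩
      refine le_antisymm le_top ?_
      calc (⊤ : H) = ⨆ x : X, lam (x, b) := (su b).symm
        _ ≤ _ := by
          refine iSup_le fun x => ?_
          have h1 : lam (x, b) ≤ ⨆ x', ⨆ _ : R x x', lam' (x', b') := by
            rw [← hd x b']
            exact le_iSup_of_le b (le_iSup_of_le hS le_rfl)
          calc lam (x, b) = lam (x, b) ⊓ (⨆ x', ⨆ _ : R x x', lam' (x', b')) :=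
                (inf_eq_left.mpr h1).symm
            _ = ⨆ x', ⨆ _ : R x x', lam (x, b) ⊓ lam' (x', b') := by
                rw [inf_iSup_eq]
                exact iSup_congr fun x' => inf_iSup_eq _ _
            _ ≤ _ := by
                refine iSup_le fun x' => iSup_le fun hR => ?_
                exact le_iSup_of_le (⟨(x, x'), hR⟩ : {p : X × X' // R p.1 p.2}) le_rfl
    · -- injective
      rintro ⟨⟨x₁, x₁'⟩, hR₁⟩ ⟨⟨x₂, x₂'⟩, hR₂⟩ ⟨⟨y, y'⟩, hS⟩
      have key : (lam (x₁, y) ⊓ lam' (x₁', y')) ⊓ (lam (x₂, y) ⊓ lam' (x₂', y')) ≤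
          (lam (x₁, y) ⊓ lam (x₂, y)) ⊓ (lam' (x₁', y') ⊓ lam' (x₂', y')) := by
        refine le_inf (le_inf ?_ ?_) (le_inf ?_ ?_) <;>
          simp [inf_le_of_left_le, inf_le_of_right_le, inf_le_left, inf_le_right]
      refine key.trans ((inf_le_inf (inj x₁ x₂ y) (inj' x₁' x₂' y')).trans
        (aux_inf_top fun h1 h2 => ?_))
      exact Subtype.ext (Prod.ext h1 h2)
  · rintro ⟨ted, _, tsu, _⟩ a b'
    refine le_antisymm ?_ ?_
    · refine iSup_le fun y => iSup_le fun hS => ?_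
      have htop := tsu ⟨(y, b'), hS⟩
      calc lam (a, y) = lam (a, y) ⊓
            ⨆ p : {p : X × X' // R p.1 p.2}, lam (p.1.1, y) ⊓ lam' (p.1.2, b') := by
              rw [htop, inf_top_eq]
        _ = ⨆ p : {p : X × X' // R p.1 p.2},
              lam (a, y) ⊓ (lam (p.1.1, y) ⊓ lam' (p.1.2, b')) := inf_iSup_eq _ _
        _ ≤ ⨆ x', ⨆ _ : R a x', lam' (x', b') := by
            refine iSup_le ?_
            rintro ⟨⟨x, x'⟩, hR⟩
            have : lam (a, y) ⊓ (lam (x, y) ⊓ lam' (x', b')) ≤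
                (⨆ _ : a = x, (⊤ : H)) ⊓ lam' (x', b') := by
              rw [← inf_assoc]
              exact inf_le_inf_right _ (inj a x y)
            refine this.trans ?_
            rw [aux_prop_inf]
            refine iSup_le fun heq => ?_
            subst heq
            exact le_iSup_of_le x' (le_iSup_of_le hR le_rfl)
    · refine iSup_le fun x' => iSup_le fun hR => ?_
      have htop := ted ⟨(a, x'), hR⟩
      calc lam' (x', b') = lam' (x', b') ⊓
            ⨆ q : {q : Y × Y' // S q.1 q.2}, lam (a, q.1.1) ⊓ lam' (x', q.1.2) := by
              rw [htop, inf_top_eq]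
        _ = ⨆ q : {q : Y × Y' // S q.1 q.2},
              lam' (x', b') ⊓ (lam (a, q.1.1) ⊓ lam' (x', q.1.2)) := inf_iSup_eq _ _
        _ ≤ ⨆ y, ⨆ _ : S y b', lam (a, y) := by
            refine iSup_le ?_
            rintro ⟨⟨y, y'⟩, hS⟩
            have : lam' (x', b') ⊓ (lam (a, y) ⊓ lam' (x', y')) ≤
                (⨆ _ : b' = y', (⊤ : H)) ⊓ lam (a, y) := by
              rw [inf_comm (lam (a, y)) (lam' (x', y')), ← inf_assoc]
              exact inf_le_inf_right _ (uv' x' b' y')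
            refine this.trans ?_
            rw [aux_prop_inf]
            refine iSup_le fun heq => ?_
            subst heq
            exact le_iSup_of_le y (le_iSup_of_le hS le_rfl)
end

section
/- Let H be a frame, λ : X × Y → H and λ' : X' × Y' → H ℓ-relations, and consider spans X ←p R →p' X' and Y ←q S →q' Y' (functions p : R → X, p' : R → X', q : S → Y, q' : S → Y') together with an ℓ-relation θ : R × S → H. Suppose ◊₁(p', q') holds between θ and λ', i.e. for all r ∈ R, b' ∈ Y': λ'(p'(r), b') = ⨆ s : S, (q'(s) = b') • θ(r, s); and ◊₂(p, q) holds between θ and λ, i.e. for all a ∈ X, s ∈ S: λ(a, q(s)) = ⨆ r : R, (p(r) = a) • θ(r, s). Then ◊(R̃, S̃) holds between λ and λ', where R̃ a x' ↔ ∃ r, p(r) = a ∧ p'(r) = x' and S̃ y b' ↔ ∃ s, q(s) = y ∧ q'(s) = b'; i.e. for all a ∈ X, b' ∈ Y': ⨆ y : Y, (S̃ y b') • λ(a, y) = ⨆ x' : X', (R̃ a x') • λ'(x', b'). -/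
/-- Given ℓ-relations `λ : X × Y → H`, `λ' : X' × Y' → H` over a frame `H`,
spans `X ← R → X'` (via `p`, `p'`) and `Y ← S → Y'` (via `q`, `q'`), and an
ℓ-relation `θ : R × S → H` such that `◊₁(p', q')` holds between `θ` and `λ'`
and `◊₂(p, q)` holds between `θ` and `λ`, the diagram `◊(R̃, S̃)` holds between
`λ` and `λ'`, where `R̃` and `S̃` are the relations induced by the spans. -/
theorem diamond_of_diamond₁_and_diamond₂ {X X' Y Y' R S H : Type*} [Order.Frame H]
    (lam : X × Y → H) (lam' : X' × Y' → H) (theta : R × S → H)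
    (p : R → X) (p' : R → X') (q : S → Y) (q' : S → Y')
    (h₁ : ∀ (r : R) (b' : Y'),
      lam' (p' r, b') = ⨆ s : S, ⨆ (_ : q' s = b'), theta (r, s))
    (h₂ : ∀ (a : X) (s : S),
      lam (a, q s) = ⨆ r : R, ⨆ (_ : p r = a), theta (r, s)) :
    ∀ (a : X) (b' : Y'),
      (⨆ y : Y, ⨆ (_ : ∃ s : S, q s = y ∧ q' s = b'), lam (a, y)) =
        ⨆ x' : X', ⨆ (_ : ∃ r : R, p r = a ∧ p' r = x'), lam' (x', b') := by
  intro a b'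
  apply le_antisymm
  · refine iSup₂_le fun y hy => ?_
    obtain ⟨s, rfl, hs⟩ := hy
    rw [h₂]
    refine iSup₂_le fun r hr => ?_
    refine le_iSup₂_of_le (p' r) ⟨r, hr, rfl⟩ ?_
    rw [h₁]
    exact le_iSup₂_of_le s hs le_rfl
  · refine iSup₂_le fun x' hx' => ?_
    obtain ⟨r, hr, rfl⟩ := hx'
    rw [h₁]
    refine iSup₂_le fun s hs => ?_
    refine le_iSup₂_of_le (q s) ⟨s, rfl, hs⟩ ?_
    rw [h₂]
    exact le_iSup₂_of_le r hr le_rfl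
end

section
/- ◊ diagrams respect composition of relations: let H be a frame, λ : X × Y → H, λ' : X' × Y' → H, λ'' : X'' × Y'' → H ℓ-relations, and R : X → X' → Prop, R' : X' → X'' → Prop, S : Y → Y' → Prop, S' : Y' → Y'' → Prop relations. If ◊(R, S) holds between λ and λ', and ◊(R', S') holds between λ' and λ'', then ◊(R' ∘ R, S' ∘ S) holds between λ and λ'', where (R' ∘ R) a x'' ↔ ∃ x', R a x' ∧ R' x' x'' and (S' ∘ S) y b'' ↔ ∃ y', S y y' ∧ S' y' b''. -/
/-- The diagram `◊(R, S)` between ℓ-relations `λ`, `λ'` over a frame `H`. -/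
def LRel.Diamond {X X' Y Y' H : Type*} [CompleteLattice H]
    (lam : X × Y → H) (lam' : X' × Y' → H)
    (R : X → X' → Prop) (S : Y → Y' → Prop) : Prop :=
  ∀ (a : X) (b' : Y'),
    (⨆ y : Y, ⨆ (_ : S y b'), lam (a, y)) = ⨆ x' : X', ⨆ (_ : R a x'), lam' (x', b')

/-- ◊ diagrams respect composition of relations: if `◊(R, S)` holds between
`λ` and `λ'`, and `◊(R', S')` holds between `λ'` and `λ''`, then
`◊(R' ∘ R, S' ∘ S)` holds between `λ` and `λ''`. -/
theorem diamond_comp {X X' X'' Y Y' Y'' H : Type*} [Order.Frame H]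
    (lam : X × Y → H) (lam' : X' × Y' → H) (lam'' : X'' × Y'' → H)
    (R : X → X' → Prop) (R' : X' → X'' → Prop)
    (S : Y → Y' → Prop) (S' : Y' → Y'' → Prop)
    (h : LRel.Diamond lam lam' R S) (h' : LRel.Diamond lam' lam'' R' S') :
    LRel.Diamond lam lam''
      (fun a x'' => ∃ x', R a x' ∧ R' x' x'')
      (fun y b'' => ∃ y', S y y' ∧ S' y' b'') := by
  intro a b''
  calc (⨆ y, ⨆ (_ : ∃ y', S y y' ∧ S' y' b''), lam (a, y))
      = ⨆ y' : Y', ⨆ (_ : S' y' b''), ⨆ y : Y, ⨆ (_ : S y y'), lam (a, y) := by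
        apply le_antisymm
        · refine iSup_le fun y => iSup_le fun hy => ?_
          obtain ⟨y', hs, hs'⟩ := hy
          exact le_iSup_of_le y' (le_iSup_of_le hs' (le_iSup_of_le y (le_iSup_of_le hs le_rfl)))
        · refine iSup_le fun y' => iSup_le fun hs' => iSup_le fun y => iSup_le fun hs => ?_
          exact le_iSup_of_le y (le_iSup_of_le ⟨y', hs, hs'⟩ le_rfl)
    _ = ⨆ y' : Y', ⨆ (_ : S' y' b''), ⨆ x' : X', ⨆ (_ : R a x'), lam' (x', y') :=
        iSup_congr fun y' => by rw [h a y']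
    _ = ⨆ x' : X', ⨆ (_ : R a x'), ⨆ y' : Y', ⨆ (_ : S' y' b''), lam' (x', y') := by
        apply le_antisymm
        · refine iSup_le fun y' => iSup_le fun hs' => iSup_le fun x' => iSup_le fun hr => ?_
          exact le_iSup_of_le x' (le_iSup_of_le hr (le_iSup_of_le y' (le_iSup_of_le hs' le_rfl)))
        · refine iSup_le fun x' => iSup_le fun hr => iSup_le fun y' => iSup_le fun hs' => ?_
          exact le_iSup_of_le y' (le_iSup_of_le hs' (le_iSup_of_le x' (le_iSup_of_le hr le_rfl)))
    _ = ⨆ x' : X', ⨆ (_ : R a x'), ⨆ x'' : X'', ⨆ (_ : R' x' x''), lam'' (x'', b'') :=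
        iSup_congr fun x' => by rw [h' x' b'']
    _ = ⨆ x'' : X'', ⨆ (_ : ∃ x', R a x' ∧ R' x' x''), lam'' (x'', b'') := by
        apply le_antisymm
        · refine iSup_le fun x' => iSup_le fun hr => iSup_le fun x'' => iSup_le fun hr' => ?_
          exact le_iSup_of_le x'' (le_iSup_of_le ⟨x', hr, hr'⟩ le_rfl)
        · refine iSup_le fun x'' => iSup_le fun hx => ?_
          obtain ⟨x', hr, hr'⟩ := hx
          exact le_iSup_of_le x' (le_iSup_of_le hr (le_iSup_of_le x'' (le_iSup_of_le hr' le_rfl)))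
end

section
/- Let H be a frame, λ : X × Y → H and λ' : X' × Y' → H ℓ-relations, and f : X → X', g : Y → Y' functions. (a) If ◊₁(f, g) holds, or if ◊₂(f, g) holds, then ▷(f, g) holds, i.e. λ(a, b) ≤ λ'(f a, g b) for all a ∈ X, b ∈ Y. (b) Conversely, if λ and λ' are ℓ-bijections and ▷(f, g) holds, then both ◊₁(f, g) and ◊₂(f, g) hold. -/
/-- The diagram `▷(f, g)` between ℓ-relations `λ` and `λ'`. -/
def LRel.Tri {X X' Y Y' H : Type*} [CompleteLattice H]
    (lam : X × Y → H) (lam' : X' × Y' → H) (f : X → X') (g : Y → Y') : Prop :=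
  ∀ (a : X) (b : Y), lam (a, b) ≤ lam' (f a, g b)

/-- The diagram `◊₁(f, g)` between ℓ-relations `λ` and `λ'`. -/
def LRel.Diamond₁ {X X' Y Y' H : Type*} [CompleteLattice H]
    (lam : X × Y → H) (lam' : X' × Y' → H) (f : X → X') (g : Y → Y') : Prop :=
  ∀ (a : X) (b' : Y'), lam' (f a, b') = ⨆ y : Y, ⨆ (_ : g y = b'), lam (a, y)

/-- The diagram `◊₂(f, g)` between ℓ-relations `λ` and `λ'`. -/
def LRel.Diamond₂ {X X' Y Y' H : Type*} [CompleteLattice H]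
    (lam : X × Y → H) (lam' : X' × Y' → H) (f : X → X') (g : Y → Y') : Prop :=
  ∀ (a' : X') (b : Y), lam' (a', g b) = ⨆ x : X, ⨆ (_ : f x = a'), lam (x, b)

private lemma lrel_aux {H : Type*} [Order.Frame H] {p : Prop} {a : H} :
    (⨆ _ : p, (⊤ : H)) ⊓ a ≤ ⨆ _ : p, a := by
  rw [iSup_inf_eq]
  exact iSup_mono fun _ => inf_le_right

/-- (a) Either `◊₁(f, g)` or `◊₂(f, g)` implies `▷(f, g)`.
(b) Conversely, if `λ` and `λ'` are ℓ-bijections, `▷(f, g)` implies both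
`◊₁(f, g)` and `◊₂(f, g)`. -/
theorem tri_of_diamond_and_diamond_of_tri_of_bijections
    {X X' Y Y' H : Type*} [Order.Frame H]
    (lam : X × Y → H) (lam' : X' × Y' → H) (f : X → X') (g : Y → Y') :
    ((LRel.Diamond₁ lam lam' f g → LRel.Tri lam lam' f g) ∧
      (LRel.Diamond₂ lam lam' f g → LRel.Tri lam lam' f g)) ∧
    (LRel.Bij lam → LRel.Bij lam' → LRel.Tri lam lam' f g →
      LRel.Diamond₁ lam lam' f g ∧ LRel.Diamond₂ lam lam' f g) := by
  refine ⟨⟨fun h a b => ?_, fun h a b => ?_⟩, ?_⟩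
  · rw [h a (g b)]
    exact le_iSup_of_le b (le_iSup_of_le rfl le_rfl)
  · rw [h (f a) b]
    exact le_iSup_of_le a (le_iSup_of_le rfl le_rfl)
  rintro ⟨ed, uv, su, inj⟩ ⟨ed', uv', su', inj'⟩ tri
  constructor
  · intro a b'
    apply le_antisymm
    · calc lam' (f a, b') = lam' (f a, b') ⊓ ⨆ y, lam (a, y) := by
            rw [ed a, inf_top_eq]
        _ = ⨆ y, lam' (f a, b') ⊓ lam (a, y) := by rw [inf_iSup_eq]
        _ ≤ ⨆ y, ⨆ (_ : g y = b'), lam (a, y) := by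
            refine iSup_mono fun y => ?_
            have h1 : lam' (f a, b') ⊓ lam (a, y) ≤ ⨆ _ : b' = g y, (⊤ : H) :=
              le_trans (inf_le_inf_left _ (tri a y)) (uv' (f a) b' (g y))
            refine le_trans (le_inf h1 inf_le_right) (le_trans lrel_aux ?_)
            exact iSup_le fun h => le_iSup (fun _ : g y = b' => lam (a, y)) h.symm
    · exact iSup_le fun y => iSup_le fun h => h ▸ tri a y
  · intro a' b
    apply le_antisymm
    · calc lam' (a', g b) = lam' (a', g b) ⊓ ⨆ x, lam (x, b) := by
            rw [su b, inf_top_eq]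
        _ = ⨆ x, lam' (a', g b) ⊓ lam (x, b) := by rw [inf_iSup_eq]
        _ ≤ ⨆ x, ⨆ (_ : f x = a'), lam (x, b) := by
            refine iSup_mono fun x => ?_
            have h1 : lam' (a', g b) ⊓ lam (x, b) ≤ ⨆ _ : a' = f x, (⊤ : H) :=
              le_trans (inf_le_inf_left _ (tri x b)) (inj' a' (f x) (g b))
            refine le_trans (le_inf h1 inf_le_right) (le_trans lrel_aux ?_)
            exact iSup_le fun h => le_iSup (fun _ : f x = a' => lam (x, b)) h.symm
    · exact iSup_le fun x => iSup_le fun h => h ▸ tri x b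
end

section
/- Let H be a frame and λ : X × Y → H an ℓ-relation. The inverse image λ* : (Y → H) → (X → H), λ*(θ)(x) = ⨆ y, λ(x, y) ⊓ θ(y), always preserves arbitrary suprema (with pointwise order), and: λ is everywhere defined (ed) if and only if λ*(⊤) = ⊤; λ is univalued (uv) if and only if λ*(θ ⊓ θ') = λ*(θ) ⊓ λ*(θ') for all θ, θ' : Y → H. Hence λ is an ℓ-function if and only if λ* is a frame homomorphism from the pointwise frame Y → H to the pointwise frame X → H. Symmetrically, the direct image λ_* : (X → H) → (Y → H), λ_*(ξ)(y) = ⨆ x, λ(x, y) ⊓ ξ(x), always preserves arbitrary suprema; λ is surjective (su) iff λ_*(⊤) = ⊤, injective (in) iff λ_* preserves binary infima, and λ is an ℓ-op-function iff λ_* is a frame homomorphism. -/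
/-- A frame homomorphism: preserves arbitrary suprema, binary infima and `⊤`. -/
def IsFrameHom {A B : Type*} [CompleteLattice A] [CompleteLattice B] (g : A → B) : Prop :=
  (∀ s : Set A, g (sSup s) = ⨆ a ∈ s, g a) ∧ (∀ a b : A, g (a ⊓ b) = g a ⊓ g b) ∧ g ⊤ = ⊤

/-- The inverse image of an ℓ-relation. -/
def lamStar {X Y H : Type*} [CompleteLattice H] (lam : X × Y → H) :
    (Y → H) → (X → H) :=
  fun θ x => ⨆ y : Y, lam (x, y) ⊓ θ y

/-- The direct image of an ℓ-relation. -/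
def lamLower {X Y H : Type*} [CompleteLattice H] (lam : X × Y → H) :
    (X → H) → (Y → H) :=
  fun ξ y => ⨆ x : X, lam (x, y) ⊓ ξ x

section Aux
variable {A B H : Type*} [Order.Frame H]

private def img (f : A → B → H) : (B → H) → (A → H) := fun θ a => ⨆ b, f a b ⊓ θ b

private lemma img_sSup (f : A → B → H) (s : Set (B → H)) :
    img f (sSup s) = ⨆ θ ∈ s, img f θ := by
  funext a
  simp only [img, iSup_apply, sSup_apply, iSup_subtype', inf_iSup_eq]
  exact iSup_comm

private lemma img_top_iff (f : A → B → H) :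
    (∀ a, (⨆ b, f a b) = ⊤) ↔ img f ⊤ = ⊤ := by
  constructor
  · intro h; funext a; simp [img, h a]
  · intro h a
    simpa [img] using congrFun h a

private lemma img_inf_iff (f : A → B → H) :
    (∀ (a : A) (b₁ b₂ : B), f a b₁ ⊓ f a b₂ ≤ ⨆ (_ : b₁ = b₂), (⊤ : H)) ↔
      (∀ θ θ' : B → H, img f (θ ⊓ θ') = img f θ ⊓ img f θ') := by
  constructor
  · intro h θ θ'
    funext a
    apply le_antisymm
    · refine le_inf ?_ ?_ <;>
        exact iSup_mono fun b => inf_le_inf_left _ (by simp [Pi.inf_apply])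
    · simp only [img, Pi.inf_apply]
      rw [iSup_inf_eq]
      refine iSup_le fun b₁ => ?_
      rw [inf_iSup_eq]
      refine iSup_le fun b₂ => ?_
      have h1 : f a b₁ ⊓ θ b₁ ⊓ (f a b₂ ⊓ θ' b₂) ≤
          (⨆ (_ : b₁ = b₂), (⊤ : H)) ⊓ (f a b₁ ⊓ θ b₁ ⊓ (f a b₂ ⊓ θ' b₂)) := by
        refine le_inf ((inf_le_inf inf_le_left inf_le_left).trans (h a b₁ b₂)) le_rfl
      refine h1.trans ?_
      rw [iSup_inf_eq]
      refine iSup_le fun hb => ?_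
      subst hb
      simp only [top_inf_eq]
      refine le_iSup_of_le b₁ (le_inf (le_trans inf_le_left inf_le_left)
        (le_inf (le_trans inf_le_left inf_le_right) (le_trans inf_le_right inf_le_right)))
  · intro h a b₁ b₂
    have key : ∀ b : B, img f (fun b' => ⨆ (_ : b' = b), (⊤ : H)) a = f a b := by
      intro b
      apply le_antisymm
      · refine iSup_le fun b' => ?_
        rw [inf_iSup_eq]
        refine iSup_le fun hb => ?_
        subst hb; simp
      · refine le_iSup_of_le b ?_; simp
    have h2 := congrFun (h (fun b' => ⨆ (_ : b' = b₁), (⊤ : H))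
      (fun b' => ⨆ (_ : b' = b₂), (⊤ : H))) a
    rw [Pi.inf_apply, key b₁, key b₂] at h2
    rw [← h2]
    simp only [img, Pi.inf_apply]
    refine iSup_le fun b => ?_
    by_cases hb1 : b = b₁
    · by_cases hb2 : b = b₂
      · subst hb1; subst hb2; simp
      · simp [hb2]
    · simp [hb1]

private lemma img_frameHom_iff (f : A → B → H) :
    ((∀ a, (⨆ b, f a b) = ⊤) ∧
        (∀ (a : A) (b₁ b₂ : B), f a b₁ ⊓ f a b₂ ≤ ⨆ (_ : b₁ = b₂), (⊤ : H))) ↔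
      IsFrameHom (img f) := by
  constructor
  · rintro ⟨h1, h2⟩
    exact ⟨img_sSup f, (img_inf_iff f).1 h2, (img_top_iff f).1 h1⟩
  · rintro ⟨_, h2, h3⟩
    exact ⟨(img_top_iff f).2 h3, (img_inf_iff f).2 h2⟩

end Aux

/-- For an ℓ-relation `λ : X × Y → H` over a frame `H`: the inverse image `λ*`
always preserves arbitrary suprema; `λ` is ed iff `λ*` preserves `⊤`; `λ` is uv
iff `λ*` preserves binary infima; hence `λ` is an ℓ-function iff `λ*` is a
frame homomorphism.  Symmetrically for the direct image `λ_*` and the axioms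
su, in and ℓ-op-functions. -/
theorem inverse_image_frameHom_iff_lFunction {X Y H : Type*} [Order.Frame H]
    (lam : X × Y → H) :
    (∀ s : Set (Y → H), lamStar lam (sSup s) = ⨆ θ ∈ s, lamStar lam θ) ∧
    ((∀ x : X, (⨆ y : Y, lam (x, y)) = ⊤) ↔ lamStar lam ⊤ = ⊤) ∧
    ((∀ (x : X) (y₁ y₂ : Y), lam (x, y₁) ⊓ lam (x, y₂) ≤ ⨆ (_ : y₁ = y₂), (⊤ : H)) ↔
      (∀ θ θ' : Y → H, lamStar lam (θ ⊓ θ') = lamStar lam θ ⊓ lamStar lam θ')) ∧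
    (((∀ x : X, (⨆ y : Y, lam (x, y)) = ⊤) ∧
        (∀ (x : X) (y₁ y₂ : Y), lam (x, y₁) ⊓ lam (x, y₂) ≤ ⨆ (_ : y₁ = y₂), (⊤ : H))) ↔
      IsFrameHom (lamStar lam)) ∧
    (∀ s : Set (X → H), lamLower lam (sSup s) = ⨆ ξ ∈ s, lamLower lam ξ) ∧
    ((∀ y : Y, (⨆ x : X, lam (x, y)) = ⊤) ↔ lamLower lam ⊤ = ⊤) ∧
    ((∀ (x₁ x₂ : X) (y : Y), lam (x₁, y) ⊓ lam (x₂, y) ≤ ⨆ (_ : x₁ = x₂), (⊤ : H)) ↔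
      (∀ ξ ξ' : X → H, lamLower lam (ξ ⊓ ξ') = lamLower lam ξ ⊓ lamLower lam ξ')) ∧
    (((∀ y : Y, (⨆ x : X, lam (x, y)) = ⊤) ∧
        (∀ (x₁ x₂ : X) (y : Y), lam (x₁, y) ⊓ lam (x₂, y) ≤ ⨆ (_ : x₁ = x₂), (⊤ : H))) ↔
      IsFrameHom (lamLower lam)) := by
  have estar : lamStar lam = img (fun x y => lam (x, y)) := rfl
  have elow : lamLower lam = img (fun y x => lam (x, y)) := rfl
  rw [estar, elow]
  have hin : (∀ (x₁ x₂ : X) (y : Y), lam (x₁, y) ⊓ lam (x₂, y) ≤ ⨆ (_ : x₁ = x₂), (⊤ : H)) ↔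
      (∀ (y : Y) (x₁ x₂ : X), lam (x₁, y) ⊓ lam (x₂, y) ≤ ⨆ (_ : x₁ = x₂), (⊤ : H)) :=
    ⟨fun h y x₁ x₂ => h x₁ x₂ y, fun h x₁ x₂ y => h y x₁ x₂⟩
  exact ⟨img_sSup _, img_top_iff (fun x y => lam (x, y)),
    img_inf_iff (fun x y => lam (x, y)), img_frameHom_iff (fun x y => lam (x, y)),
    img_sSup _, img_top_iff (fun y x => lam (x, y)),
    hin.trans (img_inf_iff (fun y x => lam (x, y))),
    (and_congr_right fun _ => hin).trans (img_frameHom_iff (fun y x => lam (x, y)))⟩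
end

section
/- The discrete-space functor from sets to locales is full and faithful: for types X and Y, the map sending a function f : X → Y to its inverse image f* : (Y → Prop) → (X → Prop), f*(S) = S ∘ f, is a bijection between functions X → Y and frame homomorphisms from the pointwise frame Y → Prop to the pointwise frame X → Prop. -/
lemma pi_sSup_apply' {α : Type*} (s : Set (α → Prop)) (a : α) :
    sSup s a ↔ ∃ p ∈ s, p a := by
  simp [sSup_apply, iSup_Prop_eq]

lemma pi_biSup_apply' {α β : Type*} (s : Set (β → Prop)) (h : (β → Prop) → (α → Prop)) (a : α) :
    (⨆ p ∈ s, h p) a ↔ ∃ p ∈ s, h p a := by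
  simp [iSup_apply, iSup_Prop_eq]

/-- The discrete-space functor from sets to locales is full and faithful: the
assignment `f ↦ f*` (with `f*(S) = S ∘ f`) is a bijection between functions
`X → Y` and frame homomorphisms `(Y → Prop) → (X → Prop)`. -/
theorem discrete_functor_fully_faithful {X Y : Type*} :
    (∀ f : X → Y, IsFrameHom (fun S : Y → Prop => S ∘ f)) ∧
    (∀ f g : X → Y,
      (fun S : Y → Prop => S ∘ f) = (fun S : Y → Prop => S ∘ g) → f = g) ∧
    (∀ h : (Y → Prop) → (X → Prop), IsFrameHom h →
      ∃ f : X → Y, h = fun S : Y → Prop => S ∘ f) := by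
  refine ⟨?_, ?_, ?_⟩
  · intro f
    refine ⟨?_, ?_, ?_⟩
    · intro s
      funext x
      apply propext
      show sSup s (f x) ↔ (⨆ a ∈ s, (fun S : Y → Prop => S ∘ f) a) x
      rw [pi_sSup_apply', pi_biSup_apply' s (fun S => S ∘ f) x]
      rfl
    · intro a b; rfl
    · rfl
  · intro f g hfg
    funext x
    have := congrFun (congrFun hfg (fun y => y = f x)) x
    exact (cast this rfl).symm
  · intro h ⟨hsup, hinf, htop⟩
    classical
    set e : Y → (Y → Prop) := fun y y' => y' = y with he
    have hbot : h ⊥ = ⊥ := by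
      have := hsup ∅
      simpa using this
    have hex : ∀ x : X, ∃ y : Y, h (e y) x := by
      intro x
      have h1 : (⊤ : Y → Prop) = sSup (Set.range e) := by
        funext y'
        apply propext
        rw [pi_sSup_apply']
        exact ⟨fun _ => ⟨e y', ⟨y', rfl⟩, rfl⟩, fun _ => trivial⟩
      have h2 : (⊤ : X → Prop) = ⨆ a ∈ Set.range e, h a := by
        rw [← htop, h1]; exact hsup _
      have h3 : (⊤ : X → Prop) x := trivial
      rw [h2, pi_biSup_apply'] at h3
      obtain ⟨p, ⟨y, rfl⟩, hpx⟩ := h3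
      exact ⟨y, hpx⟩
    have huniq : ∀ (x : X) (y₁ y₂ : Y), h (e y₁) x → h (e y₂) x → y₁ = y₂ := by
      intro x y₁ y₂ h1 h2
      by_contra hne
      have hdisj : e y₁ ⊓ e y₂ = ⊥ := by
        funext y'
        apply propext
        simp only [he, Pi.inf_apply, inf_Prop_eq, Pi.bot_apply]
        exact ⟨fun ⟨a, b⟩ => hne (a ▸ b), fun hf => hf.elim⟩
      have := congrFun (hinf (e y₁) (e y₂)) x
      rw [hdisj, hbot] at this
      simp only [Pi.bot_apply, Pi.inf_apply, inf_Prop_eq] at this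
      exact this.symm.mp ⟨h1, h2⟩
    choose f hf using hex
    refine ⟨f, ?_⟩
    funext S x
    have h1 : S = sSup (e '' {y | S y}) := by
      funext y'
      apply propext
      rw [pi_sSup_apply']
      constructor
      · intro hy'
        exact ⟨e y', ⟨y', hy', rfl⟩, rfl⟩
      · rintro ⟨p, ⟨y, hy, rfl⟩, hp⟩
        have : y' = y := hp
        rwa [this]
    have h2 : h S x ↔ ∃ p ∈ e '' {y | S y}, h p x := by
      conv_lhs => rw [h1, hsup]
      rw [pi_biSup_apply']
    apply propext
    rw [h2]
    constructor
    · rintro ⟨p, ⟨y, hy, rfl⟩, hp⟩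
      rwa [huniq x y (f x) hp (hf x)] at hy
    · intro hSfx
      exact ⟨e (f x), ⟨f x, hSfx, rfl⟩, hf x⟩
end

section
/- H^X is the free H-module on X: let H be a frame, X a type, and define the H-singleton {x}_H : X → (X → H) by {x}_H(y) = (x = y) • ⊤, and the H-action on X → H by (a • θ)(y) = a ⊓ θ(y). Then (1) every θ : X → H satisfies θ = ⨆ x, θ(x) • {x}_H; and (2) for every complete lattice M equipped with an action • : H → M → M that preserves arbitrary suprema in each variable and satisfies (a ⊓ b) • m = a • (b • m) and ⊤ • m = m, and every function f : X → M, there exists a unique map φ : (X → H) → M preserving arbitrary suprema and satisfying φ(a • θ) = a • φ(θ) for all a ∈ H, θ : X → H, such that φ({x}_H) = f(x) for all x ∈ X; it is given by φ(θ) = ⨆ x, θ(x) • f(x). -/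
/-- `H^X` is the free `H`-module on `X`: (1) every `θ : X → H` is the supremum
`⨆ x, θ(x) • {x}_H`; (2) every function `f : X → M` into an `H`-module `M`
extends uniquely to a sup-preserving `H`-equivariant map `φ : (X → H) → M`
with `φ({x}_H) = f(x)`, given by `φ(θ) = ⨆ x, θ(x) • f(x)`. -/
theorem pi_frame_free_module {X H : Type*} [Order.Frame H]
    (M : Type*) [CompleteLattice M] (act : H → M → M)
    (hact_sSup₂ : ∀ (a : H) (s : Set M), act a (sSup s) = ⨆ m ∈ s, act a m)
    (hact_sSup₁ : ∀ (s : Set H) (m : M), act (sSup s) m = ⨆ a ∈ s, act a m)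
    (hact_inf : ∀ (a b : H) (m : M), act (a ⊓ b) m = act a (act b m))
    (hact_top : ∀ m : M, act ⊤ m = m)
    (f : X → M) :
    (∀ (θ : X → H) (y : X), θ y = ⨆ x : X, θ x ⊓ ⨆ (_ : x = y), (⊤ : H)) ∧
    (((∀ s : Set (X → H),
          (⨆ x : X, act (sSup s x) (f x)) = ⨆ θ ∈ s, ⨆ x : X, act (θ x) (f x)) ∧
        (∀ (a : H) (θ : X → H),
          (⨆ x : X, act (a ⊓ θ x) (f x)) = act a (⨆ x : X, act (θ x) (f x))) ∧
        (∀ x₀ : X,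
          (⨆ x : X, act (⨆ (_ : x₀ = x), (⊤ : H)) (f x)) = f x₀)) ∧
      (∀ φ : (X → H) → M,
        (∀ s : Set (X → H), φ (sSup s) = ⨆ θ ∈ s, φ θ) →
        (∀ (a : H) (θ : X → H), φ (fun y => a ⊓ θ y) = act a (φ θ)) →
        (∀ x₀ : X, φ (fun y => ⨆ (_ : x₀ = y), (⊤ : H)) = f x₀) →
        φ = fun θ => ⨆ x : X, act (θ x) (f x))) := by
  have hact_bot : ∀ m : M, act ⊥ m = ⊥ := by
    intro m
    have := hact_sSup₁ ∅ m
    simpa using this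
  have hdecomp : ∀ (θ : X → H) (y : X),
      θ y = ⨆ x : X, θ x ⊓ ⨆ (_ : x = y), (⊤ : H) := by
    intro θ y
    apply le_antisymm
    · refine le_trans ?_ (le_iSup _ y)
      simp
    · refine iSup_le fun x => ?_
      by_cases h : x = y
      · subst h; simp
      · simp [h]
  refine ⟨hdecomp, ⟨?_, ?_, ?_⟩, ?_⟩
  · intro s
    have h1 : ∀ x : X, act (sSup s x) (f x) = ⨆ θ ∈ s, act (θ x) (f x) := by
      intro x
      have hx : sSup s x = sSup ((fun θ : X → H => θ x) '' s) := by
        rw [sSup_image, sSup_apply]; exact iSup_subtype'' s (fun θ : X → H => θ x)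
      rw [hx, hact_sSup₁]
      rw [iSup_image]
    simp_rw [h1]
    rw [iSup_comm]
    exact iSup_congr fun θ => iSup_comm
  · intro a θ
    have h2 : act a (⨆ x : X, act (θ x) (f x)) = ⨆ x : X, act a (act (θ x) (f x)) := by
      rw [← sSup_range, hact_sSup₂, iSup_range]
    rw [h2]
    simp_rw [hact_inf]
  · intro x₀
    apply le_antisymm
    · refine iSup_le fun x => ?_
      by_cases h : x₀ = x
      · subst h; simp [hact_top]
      · simp [h, hact_bot]
    · refine le_trans ?_ (le_iSup _ x₀)
      simp [hact_top]
  · intro φ hsup hequiv hsingle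
    funext θ
    have key : sSup (Set.range fun x : X => fun y => θ x ⊓ ⨆ (_ : x = y), (⊤ : H)) = θ := by
      funext y
      rw [sSup_range, iSup_apply]
      exact (hdecomp θ y).symm
    calc φ θ = φ (sSup (Set.range fun x : X => fun y => θ x ⊓ ⨆ (_ : x = y), (⊤ : H))) := by
          rw [key]
      _ = ⨆ g ∈ Set.range fun x : X => fun y => θ x ⊓ ⨆ (_ : x = y), (⊤ : H), φ g := hsup _
      _ = ⨆ x : X, φ (fun y => θ x ⊓ ⨆ (_ : x = y), (⊤ : H)) := by rw [iSup_range]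
      _ = ⨆ x : X, act (θ x) (f x) := iSup_congr fun x => by
          rw [hequiv (θ x) (fun y => ⨆ (_ : x = y), (⊤ : H)), hsingle x]
end

section
/- The H-singleton map presents H^Y as an H-locale: let H be a frame, Y a type, and {y}_H : Y → (Y → H) given by {y}_H(z) = (y = z) • ⊤. Then (i) ⊤ = ⨆ y, {y}_H in the pointwise frame Y → H, and (ii) {x}_H ⊓ {y}_H ≤ (x = y) • ⊤ (as the constant function) for all x, y ∈ Y. Moreover, given any frame L, any frame homomorphism u : H → L, and any function f : Y → L such that (i') ⊤ = ⨆ y, f(y) and (ii') f(x) ⊓ f(y) ≤ u((x = y) • ⊤) for all x, y ∈ Y, there exists a unique frame homomorphism g : (Y → H) → L such that g({y}_H) = f(y) for all y ∈ Y and g(const a) = u(a) for all a ∈ H; it is given by g(θ) = ⨆ y, u(θ(y)) ⊓ f(y). -/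
/-- The `H`-singleton map `{−}_H : Y → H^Y`, `{y}_H(z) = (y = z) • ⊤`. -/
def singletonH {Y H : Type*} [CompleteLattice H] (y : Y) : Y → H :=
  fun z => ⨆ (_ : y = z), (⊤ : H)

lemma IsFrameHom.isup {A B : Type*} [CompleteLattice A] [CompleteLattice B] {g : A → B}
    (hg : IsFrameHom g) {ι : Sort*} (h : ι → A) : g (⨆ i, h i) = ⨆ i, g (h i) := by
  rw [_root_.iSup, hg.1, iSup_range]

/-- The `H`-singleton presents `H^Y` as an `H`-locale: (i) `⊤ = ⨆ y, {y}_H`;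
(ii) `{x}_H ⊓ {y}_H ≤ (x = y) • ⊤`; and for every frame `L`, frame
homomorphism `u : H → L`, and `f : Y → L` satisfying the analogous conditions
(i'), (ii'), there is a unique frame homomorphism `g : H^Y → L` with
`g({y}_H) = f(y)` and `g(const a) = u(a)`, given by
`g(θ) = ⨆ y, u(θ(y)) ⊓ f(y)`. -/
theorem singleton_presentation {Y H : Type*} [Order.Frame H] :
    ((⊤ : Y → H) = ⨆ y : Y, singletonH y) ∧
    (∀ (x y : Y) (z : Y),
      (singletonH x z : H) ⊓ singletonH y z ≤ ⨆ (_ : x = y), (⊤ : H)) ∧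
    (∀ (L : Type*) [Order.Frame L] (u : H → L) (f : Y → L),
      IsFrameHom u →
      ((⊤ : L) = ⨆ y : Y, f y) →
      (∀ x y : Y, f x ⊓ f y ≤ u (⨆ (_ : x = y), (⊤ : H))) →
      (IsFrameHom (fun θ : Y → H => ⨆ y : Y, u (θ y) ⊓ f y) ∧
        (∀ y : Y, (⨆ z : Y, u (singletonH y z) ⊓ f z) = f y) ∧
        (∀ a : H, (⨆ y : Y, u a ⊓ f y) = u a)) ∧
      (∀ g : (Y → H) → L, IsFrameHom g →
        (∀ y : Y, g (singletonH y) = f y) →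
        (∀ a : H, g (fun _ => a) = u a) →
        g = fun θ : Y → H => ⨆ y : Y, u (θ y) ⊓ f y)) := by
  refine ⟨?_, ?_, ?_⟩
  · ext z; simp [singletonH, iSup_apply]
  · intro x y z
    simp only [singletonH, iSup_inf_eq, inf_iSup_eq]
    exact iSup_le fun hx => iSup_le fun hy => le_iSup_of_le (hy.trans hx.symm) le_top
  · intro L _ u f hu hf1 hf2
    -- helper: u of a prop-indexed sup of ⊤
    have hup : ∀ (p : Prop), u (⨆ (_ : p), ⊤) = ⨆ (_ : p), (⊤ : L) := by
      intro p; rw [hu.isup]; exact iSup_congr fun _ => hu.2.2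
    have hsing : ∀ y : Y, (⨆ z : Y, u (singletonH y z) ⊓ f z) = f y := by
      intro y
      apply le_antisymm
      · refine iSup_le fun z => ?_
        rw [singletonH, hup, iSup_inf_eq]
        exact iSup_le fun h => by rw [top_inf_eq, h]
      · refine le_iSup_of_le y ?_
        rw [singletonH, hup]
        simp
    have hconst : ∀ a : H, (⨆ y : Y, u a ⊓ f y) = u a := by
      intro a
      rw [← inf_iSup_eq, ← hf1, inf_top_eq]
    have hhom : IsFrameHom (fun θ : Y → H => ⨆ y : Y, u (θ y) ⊓ f y) := by
      refine ⟨?_, ?_, ?_⟩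
      · intro s
        have : ∀ y : Y, sSup s y = ⨆ θ ∈ s, θ y := by
          intro y; rw [sSup_apply]; simp [iSup_subtype]
        simp only [this]
        calc ⨆ y, u (⨆ θ ∈ s, θ y) ⊓ f y
            = ⨆ y, (⨆ θ ∈ s, u (θ y)) ⊓ f y := by
              refine iSup_congr fun y => ?_
              congr 1
              rw [hu.isup]
              exact iSup_congr fun θ => hu.isup _
          _ = ⨆ y, ⨆ θ ∈ s, u (θ y) ⊓ f y := by
              refine iSup_congr fun y => ?_
              rw [iSup_inf_eq]
              exact iSup_congr fun θ => iSup_inf_eq _ _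
          _ = ⨆ θ ∈ s, ⨆ y, u (θ y) ⊓ f y := by
              rw [iSup_comm]
              exact iSup_congr fun θ => iSup_comm
      · intro θ₁ θ₂
        apply le_antisymm
        · refine iSup_le fun y => ?_
          simp only [Pi.inf_apply, hu.2.1]
          refine le_inf (le_iSup_of_le y ?_) (le_iSup_of_le y ?_) <;>
            exact inf_le_inf_right _ (by simp)
        · rw [iSup_inf_eq]
          refine iSup_le fun y => ?_
          rw [inf_iSup_eq]
          refine iSup_le fun z => ?_
          -- (u θ₁y ⊓ f y) ⊓ (u θ₂z ⊓ f z) ≤ ⨆ w, u(θ₁w ⊓ θ₂w) ⊓ f w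
          have h1 : (u (θ₁ y) ⊓ f y) ⊓ (u (θ₂ z) ⊓ f z)
              ≤ (u (θ₁ y) ⊓ u (θ₂ z) ⊓ u (⨆ (_ : y = z), (⊤ : H))) ⊓ f y := by
            have := hf2 y z
            refine le_inf (le_inf (le_inf ?_ ?_) ?_) ?_
            · exact inf_le_of_left_le inf_le_left
            · exact inf_le_of_right_le inf_le_left
            · exact le_trans (inf_le_inf inf_le_right inf_le_right) this
            · exact inf_le_of_left_le inf_le_right
          refine h1.trans ?_
          rw [← hu.2.1, ← hu.2.1]
          have h2 : θ₁ y ⊓ θ₂ z ⊓ (⨆ (_ : y = z), (⊤ : H)) ≤ (θ₁ ⊓ θ₂) y := by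
            rw [inf_iSup_eq]
            exact iSup_le fun h => by subst h; simp
          have humono : Monotone u := fun a b hab => by
            have h := hu.2.1 a b
            rw [inf_eq_left.mpr hab] at h
            exact h ▸ inf_le_right
          exact le_iSup_of_le y (inf_le_inf_right _ (humono h2))
      · show (⨆ y, u ((⊤ : Y → H) y) ⊓ f y) = ⊤
        simp only [Pi.top_apply, hu.2.2, top_inf_eq]
        exact hf1.symm
    refine ⟨⟨hhom, hsing, hconst⟩, ?_⟩
    · intro g hg hg1 hg2
      funext θ
      have hθ : θ = ⨆ y : Y, (fun _ => θ y : Y → H) ⊓ singletonH y := by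
        ext z
        rw [iSup_apply]
        apply le_antisymm
        · refine le_iSup_of_le z ?_
          simp [singletonH]
        · refine iSup_le fun y => ?_
          simp only [Pi.inf_apply, singletonH, inf_iSup_eq]
          exact iSup_le fun h => by subst h; simp
      calc g θ = g (⨆ y : Y, (fun _ => θ y : Y → H) ⊓ singletonH y) := by rw [← hθ]
        _ = ⨆ y, g ((fun _ => θ y : Y → H) ⊓ singletonH y) := hg.isup _
        _ = ⨆ y, u (θ y) ⊓ f y := by
            refine iSup_congr fun y => ?_
            rw [hg.2.1, hg2, hg1]
end
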